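/- Let F be a family of non-decreasing functions [0,∞) → [0,∞) and let X be a 1-uniformly discrete metric space. Then: (a) asdim_F(X) ≤ n if and only if for every R > 0 there is a cover 𝒰 of X with R-multiplicity at most n + 1, such that every element of 𝒰 is 2R-connected and 𝒰 is F-growing; (b) ov-asdim_F(X) ≤ n if and only if for every R > 0 there is a cover 𝒰 of X with R-multiplicity at most n + 1, such that every element of 𝒰 is 2R-connected and for every s ≥ 1 and m ≥ 0 the collection {N^m_s(U) : U ∈ 𝒰} is F-growing. -/

import Mathlib

open Metric Set

/-- A metric space is 1-uniformly discrete. -/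
def UnifDiscrete (X : Type*) [MetricSpace X] : Prop :=
  ∀ x y : X, x ≠ y → 1 ≤ dist x y

/-- Bounded geometry: balls of each radius have uniformly bounded cardinality. -/
def BddGeom (X : Type*) [MetricSpace X] : Prop :=
  ∀ R : ℝ, ∃ N : ℕ, ∀ (x : X) (s : Finset X), ↑s ⊆ Metric.closedBall x R → s.card ≤ N

/-- A regular map between metric spaces. -/
def IsRegularMap {X Y : Type*} [MetricSpace X] [MetricSpace Y] (f : X → Y) : Prop :=
  ∃ κ : ℕ, 1 ≤ κ ∧ (∀ x x' : X, dist (f x) (f x') ≤ κ * (1 + dist x x')) ∧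
    ∀ y : Y, ∃ c : Finset X, c.card ≤ κ ∧ f ⁻¹' Metric.ball y 1 ⊆ ⋃ x ∈ c, Metric.ball x 1

/-- A quasi-isometric embedding. -/
def IsQIEmbedding {X Y : Type*} [MetricSpace X] [MetricSpace Y] (f : X → Y) : Prop :=
  ∃ L D : ℝ, 1 ≤ L ∧ 0 ≤ D ∧ ∀ x x' : X,
    L⁻¹ * dist x x' - D ≤ dist (f x) (f x') ∧ dist (f x) (f x') ≤ L * dist x x' + D

/-- A coarse Lipschitz map. -/
def CoarseLipschitz {X Y : Type*} [MetricSpace X] [MetricSpace Y] (f : X → Y) : Prop :=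
  ∃ K : ℝ, 1 ≤ K ∧ ∀ x x' : X, dist (f x) (f x') ≤ K * dist x x' + K

/-- The metric of `T` is the graph metric of a 3-regular tree. -/
def IsCubicTreeMetric (T : Type*) [MetricSpace T] : Prop :=
  ∃ G : SimpleGraph T, G.Connected ∧ G.IsAcyclic ∧
    (∀ v : T, (G.neighborSet v).ncard = 3) ∧
    ∀ u v : T, dist u v = (G.dist u v : ℝ)

/-- The metric of `Z` is the graph metric of a connected graph of uniformly bounded degree. -/
def IsBddDegGraphMetric (Z : Type*) [MetricSpace Z] : Prop :=
  ∃ G : SimpleGraph Z, G.Connected ∧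
    (∃ D : ℕ, ∀ v : Z, (G.neighborSet v).ncard ≤ D) ∧
    ∀ u v : Z, dist u v = (G.dist u v : ℝ)

/-- A non-decreasing subexponential function `[0,∞) → [0,∞)`. -/
def SubexpFun (g : ℝ → ℝ) : Prop :=
  MonotoneOn g (Set.Ici 0) ∧ (∀ r : ℝ, 0 ≤ g r) ∧
    Filter.Tendsto (fun r => Real.log (g r) / r) Filter.atTop (nhds 0)

/-- Every ball of radius `r` in `Z` contains at most `g r` points. -/
def HasGrowthBound (Z : Type*) [MetricSpace Z] (g : ℝ → ℝ) : Prop :=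
  ∀ (z : Z) (r : ℝ), 0 ≤ r → ∀ s : Finset Z, ↑s ⊆ Metric.closedBall z r → (s.card : ℝ) ≤ g r

def HasSubexpGrowth (Z : Type*) [MetricSpace Z] : Prop :=
  ∃ g : ℝ → ℝ, SubexpFun g ∧ HasGrowthBound Z g

def HasPolyGrowth (Z : Type*) [MetricSpace Z] : Prop :=
  ∃ (C : ℝ) (d : ℕ), 1 ≤ C ∧ HasGrowthBound Z (fun r => C * r ^ d + C)

/-- Distinct members of the family are at distance at least `r` from each other. -/
def SepFamily {X : Type*} [MetricSpace X] (r : ℝ) (𝒰 : Set (Set X)) : Prop :=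
  ∀ U ∈ 𝒰, ∀ V ∈ 𝒰, U ≠ V → ∀ x ∈ U, ∀ y ∈ V, r ≤ dist x y

/-- A decomposition of `X` into `n+1` colours of `r`-separated pieces. -/
def Decomp {X : Type*} [MetricSpace X] (n : ℕ) (r : ℝ) (𝒰 : Fin (n+1) → Set (Set X)) : Prop :=
  (∀ x : X, ∃ i, ∃ U ∈ 𝒰 i, x ∈ U) ∧ ∀ i, SepFamily r (𝒰 i)

/-- A collection of subsets of `X` has growth uniformly controlled by the family `F`. -/
def FGrowing {X : Type*} [MetricSpace X] (F : Set (ℝ → ℝ)) (𝒰 : Set (Set X)) : Prop :=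
  ∃ f ∈ F, ∃ C : ℝ, 1 ≤ C ∧ ∀ U ∈ 𝒰, ∀ (x : X) (r : ℝ), 0 ≤ r →
    ∀ s : Finset X, ↑s ⊆ U ∩ Metric.closedBall x r → (s.card : ℝ) ≤ C * f (C * r) + C

/-- `asdim_F X ≤ n`. -/
def AsdimLE (F : Set (ℝ → ℝ)) (X : Type*) [MetricSpace X] (n : ℕ) : Prop :=
  ∀ r : ℝ, 0 < r → ∃ 𝒰 : Fin (n+1) → Set (Set X),
    Decomp n r 𝒰 ∧ FGrowing F (⋃ i, 𝒰 i)

/-- Iterated neighbourhoods `N^m_s(Y)` of `Y` with respect to the collection `𝒴`. -/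
def iterNbhd {X : Type*} [MetricSpace X] (𝒴 : Set (Set X)) (s : ℝ) : ℕ → Set X → Set X
  | 0, Y => Y
  | m + 1, Y => ⋃₀ {Y' | Y' ∈ 𝒴 ∧ ∃ x ∈ Y', ∃ z ∈ iterNbhd 𝒴 s m Y, dist x z ≤ s}

/-- `ov-asdim_F X ≤ n`. -/
def OvAsdimLE (F : Set (ℝ → ℝ)) (X : Type*) [MetricSpace X] (n : ℕ) : Prop :=
  ∀ r : ℝ, 0 < r → ∃ 𝒰 : Fin (n+1) → Set (Set X),
    Decomp n r 𝒰 ∧ ∀ s : ℝ, 1 ≤ s → ∀ m : ℕ,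
      FGrowing F ((iterNbhd (⋃ i, 𝒰 i) s m) '' (⋃ i, 𝒰 i))

/-- A family of non-decreasing functions `[0,∞) → [0,∞)`. -/
def NondecrFamily (F : Set (ℝ → ℝ)) : Prop :=
  ∀ f ∈ F, MonotoneOn f (Set.Ici 0) ∧ ∀ r : ℝ, 0 ≤ r → 0 ≤ f r

/-- The family of non-decreasing subexponential functions. -/
def seFamily : Set (ℝ → ℝ) := {g | SubexpFun g}

/-- The family of non-decreasing functions bounded by `C·r^d + C`. -/
def polyFamily (d : ℕ) : Set (ℝ → ℝ) :=
  {f | MonotoneOn f (Set.Ici 0) ∧ (∀ r : ℝ, 0 ≤ f r) ∧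
    ∃ C : ℝ, 0 < C ∧ ∀ r : ℝ, 0 ≤ r → f r ≤ C * r ^ d + C}

/-- `asdim X ≤ n` : classical asymptotic dimension. -/
def ClassicalAsdimLE (X : Type*) [MetricSpace X] (n : ℕ) : Prop :=
  ∀ r : ℝ, 0 < r → ∃ 𝒰 : Fin (n+1) → Set (Set X), Decomp n r 𝒰 ∧
    ∃ B : ℝ, ∀ U ∈ ⋃ i, 𝒰 i, ∀ x ∈ U, ∀ y ∈ U, dist x y ≤ B

/-- `𝒰` has `R`-multiplicity at most `k`: every closed ball of radius `R` meets at most `k`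
members of `𝒰`. -/
def RMultLE {X : Type*} [MetricSpace X] (𝒰 : Set (Set X)) (R : ℝ) (k : ℕ) : Prop :=
  ∀ x : X, ∀ t : Finset (Set X), ↑t ⊆ 𝒰 →
    (∀ U ∈ t, (U ∩ Metric.closedBall x R).Nonempty) → t.card ≤ k

/-- `U` is `ρ`-connected. -/
def RConn {X : Type*} [MetricSpace X] (ρ : ℝ) (U : Set X) : Prop :=
  ∀ x ∈ U, ∀ y ∈ U, ∃ (m : ℕ) (c : ℕ → X), c 0 = x ∧ c m = y ∧
    (∀ i ≤ m, c i ∈ U) ∧ ∀ i < m, dist (c i) (c (i + 1)) ≤ ρ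

/-!
From a decomposition to a cover: split every piece of a `(2R+1)`-separated decomposition into its
`2R`-chain components. Two components met by one ball of radius `R` come within `2R` of each other,
so they have different colours; and each component lies in a piece, which controls its growth.

From a cover to a decomposition: put `R = (n+1) r` and let `S_j(x)` be the set of members of the
cover meeting `B(x, j r)`. These increase with `j`, `S_0(x)` is nonempty and `S_{n+1}(x)` has at most
`n+1` elements, so some level `j(x) ≤ n` has `S_j(x) = S_{j+1}(x)`. The pieces of colour `i` are the
classes of points of level `i` with the same `S_i`; two points of level `i` at distance `< r` have
the same `S_i`. Every piece `P` is covered by at most `n+1` members of the cover, each of them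
within `R` of every point of `P`, so the pieces and their iterated neighbourhoods are controlled by
the members of the cover and their iterated neighbourhoods.
-/

theorem Set.finite_and_ncard_le_of_forall_finset_card_le {α : Type*} {S : Set α} {k : ℕ}
    (h : ∀ t : Finset α, ↑t ⊆ S → t.card ≤ k) : S.Finite ∧ S.ncard ≤ k := by
  have hfin : S.Finite := by
    by_contra hinf
    obtain ⟨t, ht, hcard⟩ := Set.Infinite.exists_subset_card_eq hinf (k + 1)
    have := h t ht
    omega
  refine ⟨hfin, ?_⟩
  rw [Set.ncard_eq_toFinset_card S hfin]
  exact h _ (by simp)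

theorem exists_eq_succ_of_monotone {α : Type*} {S : ℕ → Set α} (hS : Monotone S)
    (h0 : (S 0).Nonempty) {n : ℕ} (hfin : (S (n + 1)).Finite) (hcard : (S (n + 1)).ncard ≤ n + 1) :
    ∃ j ≤ n, S j = S (j + 1) := by
  by_contra! hne
  have hgrow : ∀ j ≤ n + 1, j + 1 ≤ (S j).ncard := by
    intro j hj
    induction j with
    | zero => exact (Set.ncard_pos (hfin.subset (hS (Nat.zero_le _)))).2 h0
    | succ j ih =>
      have hlt : (S j).ncard < (S (j + 1)).ncard :=
        Set.ncard_lt_ncard ((hS j.le_succ).ssubset_of_ne (hne j (by omega))) (hfin.subset (hS hj))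
      have := ih (by omega)
      omega
  have := hgrow (n + 1) le_rfl
  omega

theorem Relation.ReflTransGen.exists_nat_chain {α : Type*} {r : α → α → Prop} {a b : α}
    (h : Relation.ReflTransGen r a b) :
    ∃ (m : ℕ) (c : ℕ → α), c 0 = a ∧ c m = b ∧ ∀ i < m, r (c i) (c (i + 1)) := by
  induction h using Relation.ReflTransGen.head_induction_on with
  | refl => exact ⟨0, fun _ => b, rfl, rfl, by simp⟩
  | head hac _ ih =>
    obtain ⟨m, c, rfl, rfl, hc⟩ := ih
    refine ⟨m + 1, fun | 0 => _ | i + 1 => c i, rfl, rfl, ?_⟩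
    rintro (_ | i) hi
    · exact hac
    · exact hc i (by omega)

section Growth

variable {X : Type*} [MetricSpace X] {F : Set (ℝ → ℝ)} {𝒱 𝒲 : Set (Set X)}

theorem FGrowing.of_forall_subset_mem (hW : FGrowing F 𝒲) (h : ∀ V ∈ 𝒱, ∃ W ∈ 𝒲, V ⊆ W) :
    FGrowing F 𝒱 := by
  obtain ⟨f, hf, C, hC, hbound⟩ := hW
  refine ⟨f, hf, C, hC, fun V hV x r hr s hs => ?_⟩
  obtain ⟨W, hW, hVW⟩ := h V hV
  exact hbound W hW x r hr s (hs.trans (inter_subset_inter_left _ hVW))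

theorem FGrowing.of_forall_subset_sUnion (hF : NondecrFamily F) (hW : FGrowing F 𝒲) {k : ℕ}
    (h : ∀ V ∈ 𝒱, ∃ σ ⊆ 𝒲, σ.Finite ∧ σ.ncard ≤ k ∧ V ⊆ ⋃₀ σ) : FGrowing F 𝒱 := by
  classical
  obtain ⟨f, hf, C, hC, hbound⟩ := hW
  have hC0 : 0 ≤ C := by linarith
  have hk : (0 : ℝ) ≤ k := k.cast_nonneg
  refine ⟨f, hf, (k + 1) * C, by nlinarith, fun V hV x r hr s hs => ?_⟩
  obtain ⟨σ, hσW, hσfin, hσk, hVσ⟩ := h V hV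
  obtain ⟨σ, rfl⟩ := hσfin.exists_finset_coe
  rw [ncard_coe_finset] at hσk
  set B := C * f ((k + 1) * C * r) + C
  have hB : 0 ≤ B := by
    have := (hF f hf).2 ((k + 1) * C * r) (by positivity)
    positivity
  have hsplit : s ⊆ σ.biUnion fun U => s.filter (· ∈ U) := by
    intro a ha
    obtain ⟨U, hU, haU⟩ := hVσ (hs ha).1
    exact Finset.mem_biUnion.2 ⟨U, hU, Finset.mem_filter.2 ⟨ha, haU⟩⟩
  have hpiece : ∀ U ∈ σ, ((s.filter (· ∈ U)).card : ℝ) ≤ B := by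
    intro U hU
    refine (hbound U (hσW hU) x r hr _ fun a ha => ?_).trans ?_
    · rw [Finset.coe_filter] at ha
      exact ⟨ha.2, (hs ha.1).2⟩
    · have hmono : f (C * r) ≤ f ((k + 1) * C * r) :=
        (hF f hf).1 (mem_Ici.2 (by positivity)) (mem_Ici.2 (by positivity))
          (by nlinarith [mul_nonneg (mul_nonneg hk hC0) hr])
      linarith [mul_le_mul_of_nonneg_left hmono hC0]
  calc (s.card : ℝ) ≤ ∑ U ∈ σ, ((s.filter (· ∈ U)).card : ℝ) := by
        exact_mod_cast (Finset.card_le_card hsplit).trans Finset.card_biUnion_le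
    _ ≤ σ.card * B := by simpa using Finset.sum_le_card_nsmul σ _ B hpiece
    _ ≤ (k + 1) * B := by gcongr; exact_mod_cast hσk.trans k.le_succ
    _ = (k + 1) * C * f ((k + 1) * C * r) + (k + 1) * C := by ring

end Growth

section IterNbhd

variable {X : Type*} [MetricSpace X] {𝒰 𝒴 : Set (Set X)} {s : ℝ}

theorem mem_iterNbhd_succ {Y : Set X} {m : ℕ} {y : X} :
    y ∈ iterNbhd 𝒴 s (m + 1) Y ↔
      ∃ Y' ∈ 𝒴, y ∈ Y' ∧ ∃ x ∈ Y', ∃ z ∈ iterNbhd 𝒴 s m Y, dist x z ≤ s := by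
  simp only [iterNbhd, mem_sUnion, mem_ofPred_eq]
  aesop

theorem iterNbhd_subset_iterNbhd (h𝒰 : ∀ U ∈ 𝒰, ∃ Y ∈ 𝒴, U ⊆ Y) {U Y : Set X} (hUY : U ⊆ Y)
    (m : ℕ) : iterNbhd 𝒰 s m U ⊆ iterNbhd 𝒴 s m Y := by
  induction m with
  | zero => exact hUY
  | succ m ih =>
    intro y hy
    obtain ⟨U', hU', hyU', x, hxU', z, hz, hxz⟩ := mem_iterNbhd_succ.1 hy
    obtain ⟨Y', hY', hUY'⟩ := h𝒰 U' hU'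
    exact mem_iterNbhd_succ.2 ⟨Y', hY', hUY' hyU', x, hUY' hxU', z, ih hz, hxz⟩

theorem FGrowing.image_iterNbhd_of_forall_subset_mem {F : Set (ℝ → ℝ)} {m : ℕ}
    (h𝒰 : ∀ U ∈ 𝒰, ∃ Y ∈ 𝒴, U ⊆ Y) (hgrow : FGrowing F (iterNbhd 𝒴 s m '' 𝒴)) :
    FGrowing F (iterNbhd 𝒰 s m '' 𝒰) := by
  refine hgrow.of_forall_subset_mem ?_
  rintro _ ⟨U, hU, rfl⟩
  obtain ⟨Y, hY, hUY⟩ := h𝒰 U hU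
  exact ⟨_, mem_image_of_mem _ hY, iterNbhd_subset_iterNbhd h𝒰 hUY m⟩

end IterNbhd

def membersMeeting {X : Type*} (𝒰 : Set (Set X)) (B : Set X) : Set (Set X) :=
  {U ∈ 𝒰 | (U ∩ B).Nonempty}

theorem membersMeeting_mono {X : Type*} {𝒰 : Set (Set X)} {B B' : Set X} (h : B ⊆ B') :
    membersMeeting 𝒰 B ⊆ membersMeeting 𝒰 B' :=
  fun _ ⟨hU, hUB⟩ => ⟨hU, hUB.mono (inter_subset_inter_right _ h)⟩

section MembersMeeting

variable {X : Type*} [MetricSpace X] {𝒰 𝒴 : Set (Set X)} {R s : ℝ}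

theorem mem_membersMeeting_closedBall {U : Set X} {x : X} {ρ : ℝ} (hU : U ∈ 𝒰) (hx : x ∈ U)
    (hρ : 0 ≤ ρ) : U ∈ membersMeeting 𝒰 (closedBall x ρ) :=
  ⟨hU, x, hx, mem_closedBall_self hρ⟩

theorem RMultLE.finite_membersMeeting {k : ℕ} (h : RMultLE 𝒰 R k) (x : X) :
    (membersMeeting 𝒰 (closedBall x R)).Finite ∧ (membersMeeting 𝒰 (closedBall x R)).ncard ≤ k :=
  Set.finite_and_ncard_le_of_forall_finset_card_le fun t ht =>
    h x t (fun _ hU => (ht hU).1) fun _ hU => (ht hU).2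

theorem iterNbhd_subset_biUnion_iterNbhd
    (hnear : ∀ P ∈ 𝒴, ∀ x ∈ P, P ⊆ ⋃₀ membersMeeting 𝒰 (closedBall x R))
    {σ : Set (Set X)} {P : Set X} (hP : P ⊆ ⋃₀ σ) (m : ℕ) :
    iterNbhd 𝒴 s m P ⊆ ⋃ U ∈ σ, iterNbhd 𝒰 (s + R) m U := by
  induction m with
  | zero => rwa [sUnion_eq_biUnion] at hP
  | succ m ih =>
    intro y hy
    obtain ⟨P', hP', hyP', x, hxP', z, hz, hxz⟩ := mem_iterNbhd_succ.1 hy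
    obtain ⟨U, hUσ, hzU⟩ := mem_iUnion₂.1 (ih hz)
    obtain ⟨U', ⟨hU', u, huU', hux⟩, hyU'⟩ := hnear P' hP' x hxP' hyP'
    refine mem_iUnion₂.2 ⟨U, hUσ, mem_iterNbhd_succ.2 ⟨U', hU', hyU', u, huU', z, hzU, ?_⟩⟩
    calc dist u z ≤ dist u x + dist x z := dist_triangle u x z
      _ ≤ s + R := by linarith [mem_closedBall.1 hux]

theorem exists_finite_sUnion_of_subset_membersMeeting {k : ℕ} (hmult : RMultLE 𝒰 R k)
    (hnear : ∀ P ∈ 𝒴, ∀ x ∈ P, P ⊆ ⋃₀ membersMeeting 𝒰 (closedBall x R)) {P : Set X}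
    (hP : P ∈ 𝒴) : ∃ σ ⊆ 𝒰, σ.Finite ∧ σ.ncard ≤ k ∧ P ⊆ ⋃₀ σ := by
  rcases P.eq_empty_or_nonempty with rfl | ⟨x, hx⟩
  · exact ⟨∅, empty_subset _, finite_empty, by simp, empty_subset _⟩
  · obtain ⟨hfin, hcard⟩ := hmult.finite_membersMeeting x
    exact ⟨_, sep_subset _ _, hfin, hcard, hnear P hP x hx⟩

theorem FGrowing.of_forall_subset_membersMeeting {F : Set (ℝ → ℝ)} (hF : NondecrFamily F)
    {k : ℕ} (hmult : RMultLE 𝒰 R k)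
    (hnear : ∀ P ∈ 𝒴, ∀ x ∈ P, P ⊆ ⋃₀ membersMeeting 𝒰 (closedBall x R))
    (hgrow : FGrowing F 𝒰) : FGrowing F 𝒴 :=
  hgrow.of_forall_subset_sUnion hF fun _ hP =>
    exists_finite_sUnion_of_subset_membersMeeting hmult hnear hP

theorem FGrowing.image_iterNbhd_of_forall_subset_membersMeeting {F : Set (ℝ → ℝ)}
    (hF : NondecrFamily F) {k : ℕ} (hmult : RMultLE 𝒰 R k)
    (hnear : ∀ P ∈ 𝒴, ∀ x ∈ P, P ⊆ ⋃₀ membersMeeting 𝒰 (closedBall x R)) {m : ℕ}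
    (hgrow : FGrowing F (iterNbhd 𝒰 (s + R) m '' 𝒰)) : FGrowing F (iterNbhd 𝒴 s m '' 𝒴) := by
  refine hgrow.of_forall_subset_sUnion hF (k := k) ?_
  rintro _ ⟨P, hP, rfl⟩
  obtain ⟨σ, hσ𝒰, hσfin, hσk, hPσ⟩ := exists_finite_sUnion_of_subset_membersMeeting hmult hnear hP
  refine ⟨_, image_mono hσ𝒰, hσfin.image _, (ncard_image_le hσfin).trans hσk, ?_⟩
  rw [sUnion_image]
  exact iterNbhd_subset_biUnion_iterNbhd hnear hPσ m

end MembersMeeting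

section ChainComponent

variable {X : Type*} [MetricSpace X] {P : Set X} {ρ : ℝ} {x y : X}

def chainStep (P : Set X) (ρ : ℝ) (a b : X) : Prop := a ∈ P ∧ b ∈ P ∧ dist a b ≤ ρ

instance : Std.Symm (chainStep P ρ) :=
  ⟨fun _ _ ⟨ha, hb, hab⟩ => ⟨hb, ha, by rwa [dist_comm]⟩⟩

def chainComponent (P : Set X) (ρ : ℝ) (x : X) : Set X :=
  {y | Relation.ReflTransGen (chainStep P ρ) x y}

theorem chainComponent_subset (hx : x ∈ P) : chainComponent P ρ x ⊆ P := fun _ hy =>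
  match hy.cases_tail with
  | .inl rfl => hx
  | .inr ⟨_, _, hstep⟩ => hstep.2.1

theorem chainComponent_eq_of_mem (hy : y ∈ chainComponent P ρ x) :
    chainComponent P ρ y = chainComponent P ρ x := by
  ext z
  exact ⟨fun hz => Relation.ReflTransGen.trans hy hz,
    fun hz => Relation.ReflTransGen.trans (Std.Symm.symm _ _ hy) hz⟩

theorem chainComponent_eq_of_dist_le {x' w w' : X} (hx : x ∈ P) (hx' : x' ∈ P)
    (hw : w ∈ chainComponent P ρ x) (hw' : w' ∈ chainComponent P ρ x') (hww' : dist w w' ≤ ρ) :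
    chainComponent P ρ x = chainComponent P ρ x' := by
  have hstep : chainStep P ρ w w' :=
    ⟨chainComponent_subset hx hw, chainComponent_subset hx' hw', hww'⟩
  rw [← chainComponent_eq_of_mem hw, ← chainComponent_eq_of_mem hw',
    chainComponent_eq_of_mem (Relation.ReflTransGen.single hstep)]

theorem rConn_chainComponent : RConn ρ (chainComponent P ρ x) := by
  intro y hy z hz
  obtain ⟨m, c, hc0, hcm, hstep⟩ :=
    (Relation.ReflTransGen.trans (Std.Symm.symm _ _ hy) hz).exists_nat_chain
  refine ⟨m, c, hc0, hcm, fun i hi => ?_, fun i hi => (hstep i hi).2.2⟩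
  induction i with
  | zero => rwa [hc0]
  | succ i ih => exact Relation.ReflTransGen.tail (ih (by omega)) (hstep i (by omega))

end ChainComponent

section DecompToCover

variable {X : Type*} [MetricSpace X] {n : ℕ} {r R : ℝ} {𝒱 : Fin (n + 1) → Set (Set X)}

theorem SepFamily.eq_of_dist_lt {𝒰 : Set (Set X)} (h : SepFamily r 𝒰) {U V : Set X} (hU : U ∈ 𝒰)
    (hV : V ∈ 𝒰) {x y : X} (hx : x ∈ U) (hy : y ∈ V) (hxy : dist x y < r) : U = V := by
  by_contra hne
  exact (h U hU V hV hne x hx y hy).not_gt hxy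

def componentCover (𝒴 : Set (Set X)) (ρ : ℝ) : Set (Set X) :=
  {W | ∃ P ∈ 𝒴, ∃ x ∈ P, W = chainComponent P ρ x}

theorem rMultLE_componentCover (hdec : Decomp n r 𝒱) (hR : 2 * R < r) :
    RMultLE (componentCover (⋃ i, 𝒱 i) (2 * R)) R (n + 1) := by
  intro x t ht hmeet
  have hcomp : ∀ W ∈ t, ∃ i, ∃ P ∈ 𝒱 i, ∃ p ∈ P, W = chainComponent P (2 * R) p := by
    intro W hW
    obtain ⟨P, hP, p, hp, rfl⟩ := ht hW
    obtain ⟨i, hi⟩ := mem_iUnion.1 hP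
    exact ⟨i, P, hi, p, hp, rfl⟩
  have : Nonempty X := ⟨x⟩
  choose! col P hP p hp hWeq using hcomp
  choose! w hw using hmeet
  have hinj : InjOn col t := by
    intro W hW W' hW' hcol
    have hww' : dist (w W) (w W') ≤ 2 * R := by
      linarith [dist_triangle_right (w W) (w W') x, mem_closedBall.1 (hw W hW).2,
        mem_closedBall.1 (hw W' hW').2]
    have hwP : w W ∈ chainComponent (P W) (2 * R) (p W) := hWeq W hW ▸ (hw W hW).1
    have hwP' : w W' ∈ chainComponent (P W') (2 * R) (p W') := hWeq W' hW' ▸ (hw W' hW').1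
    have hPP : P W = P W' := (hdec.2 (col W)).eq_of_dist_lt (hP W hW) (hcol ▸ hP W' hW')
      (chainComponent_subset (hp W hW) hwP) (chainComponent_subset (hp W' hW') hwP') (by linarith)
    rw [hWeq W hW, hWeq W' hW', ← hPP]
    exact chainComponent_eq_of_dist_le (hp W hW) (hPP ▸ hp W' hW') hwP (hPP ▸ hwP') hww'
  simpa using Finset.card_le_card_of_injOn col (fun _ _ => Finset.mem_univ _) hinj

theorem exists_cover_of_decomp (hdec : Decomp n r 𝒱) (hR : 2 * R < r) :
    ∃ 𝒰 : Set (Set X), (∀ x : X, ∃ U ∈ 𝒰, x ∈ U) ∧ RMultLE 𝒰 R (n + 1) ∧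
      (∀ U ∈ 𝒰, RConn (2 * R) U) ∧ ∀ U ∈ 𝒰, ∃ P ∈ ⋃ i, 𝒱 i, U ⊆ P := by
  refine ⟨componentCover (⋃ i, 𝒱 i) (2 * R), fun x => ?_, rMultLE_componentCover hdec hR,
    fun _ ⟨_, _, _, _, hU⟩ => hU ▸ rConn_chainComponent, fun _ ⟨P, hP, _, hx, hU⟩ =>
      ⟨P, hP, hU ▸ chainComponent_subset hx⟩⟩
  obtain ⟨i, P, hP, hx⟩ := hdec.1 x
  exact ⟨_, ⟨P, mem_iUnion.2 ⟨i, hP⟩, x, hx, rfl⟩, Relation.ReflTransGen.refl⟩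

end DecompToCover

section CoverToDecomp

variable {X : Type*} [MetricSpace X] {n : ℕ} {r : ℝ} {𝒰 : Set (Set X)}

theorem exists_decomp_of_rMultLE (hr : 0 < r) (hcov : ∀ x : X, ∃ U ∈ 𝒰, x ∈ U)
    (hmult : RMultLE 𝒰 ((n + 1) * r) (n + 1)) :
    ∃ 𝒱 : Fin (n + 1) → Set (Set X), Decomp n r 𝒱 ∧
      ∀ P ∈ ⋃ i, 𝒱 i, ∀ x ∈ P, P ⊆ ⋃₀ membersMeeting 𝒰 (closedBall x ((n + 1) * r)) := by
  set S : ℕ → X → Set (Set X) := fun j x => membersMeeting 𝒰 (closedBall x (j * r))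
  have hS_mem : ∀ j x U, U ∈ 𝒰 → x ∈ U → U ∈ S j x := fun j x U hU hx =>
    mem_membersMeeting_closedBall hU hx (by positivity)
  have hlevel : ∀ x, ∃ j ≤ n, S j x = S (j + 1) x := by
    intro x
    obtain ⟨U, hU, hxU⟩ := hcov x
    obtain ⟨hfin, hcard⟩ := hmult.finite_membersMeeting x
    refine exists_eq_succ_of_monotone (S := fun j => S j x) (fun j k hjk => membersMeeting_mono
      (closedBall_subset_closedBall (by gcongr))) ⟨U, hS_mem 0 x U hU hxU⟩ ?_ ?_
    · simpa [S] using hfin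
    · simpa [S] using hcard
  choose lvl hlvl hplateau using hlevel
  -- `B(x, j r) ⊆ B(y, (j + 1) r)`, and `j = lvl y` is a plateau for `y`
  have hS_subset : ∀ x y, dist x y ≤ r → S (lvl y) x ⊆ S (lvl y) y := fun x y hxy =>
    hplateau y ▸ membersMeeting_mono (closedBall_subset_closedBall' (by push_cast; linarith))
  refine ⟨fun i => range fun a => {y | lvl y = i ∧ S i y = S i a}, ⟨fun x => ?_, ?_⟩, ?_⟩
  · exact ⟨⟨lvl x, Nat.lt_succ_of_le (hlvl x)⟩, _, mem_range_self x, rfl, rfl⟩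
  · rintro i _ ⟨a, rfl⟩ _ ⟨b, rfl⟩ hne x ⟨hxi, hxa⟩ y ⟨hyi, hyb⟩
    by_contra! hxy
    have hSxy : S i x = S i y := by
      have hxy' := hS_subset x y hxy.le
      have hyx' := hS_subset y x (by rw [dist_comm]; exact hxy.le)
      rw [hyi] at hxy'
      rw [hxi] at hyx'
      exact hxy'.antisymm hyx'
    exact hne (by simp_rw [← hxa, hSxy, hyb])
  · intro P hP x hx y hy
    obtain ⟨i, a, rfl⟩ := by simpa only [mem_iUnion, mem_range] using hP
    obtain ⟨U, hU, hyU⟩ := hcov y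
    have hUx : U ∈ S i x := hx.2 ▸ hy.2 ▸ hS_mem i y U hU hyU
    refine ⟨U, membersMeeting_mono (closedBall_subset_closedBall ?_) hUx, hyU⟩
    gcongr
    exact_mod_cast i.isLt.le

end CoverToDecomp

theorem asdim_cover_characterisation_general
    (F : Set (ℝ → ℝ)) (hF : NondecrFamily F)
    (X : Type*) [MetricSpace X] (n : ℕ) :
    (AsdimLE F X n ↔
      ∀ R : ℝ, 0 < R → ∃ 𝒰 : Set (Set X),
        (∀ x : X, ∃ U ∈ 𝒰, x ∈ U) ∧ RMultLE 𝒰 R (n + 1) ∧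
        (∀ U ∈ 𝒰, RConn (2 * R) U) ∧ FGrowing F 𝒰) ∧
    (OvAsdimLE F X n ↔
      ∀ R : ℝ, 0 < R → ∃ 𝒰 : Set (Set X),
        (∀ x : X, ∃ U ∈ 𝒰, x ∈ U) ∧ RMultLE 𝒰 R (n + 1) ∧
        (∀ U ∈ 𝒰, RConn (2 * R) U) ∧
        ∀ s : ℝ, 1 ≤ s → ∀ m : ℕ, FGrowing F ((iterNbhd 𝒰 s m) '' 𝒰)) := by
  refine ⟨⟨fun h R hR => ?_, fun h r hr => ?_⟩, ⟨fun h R hR => ?_, fun h r hr => ?_⟩⟩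
  · obtain ⟨𝒱, hdec, hgrow⟩ := h (2 * R + 1) (by linarith)
    obtain ⟨𝒰, hcov, hmult, hconn, href⟩ := exists_cover_of_decomp hdec (lt_add_one _)
    exact ⟨𝒰, hcov, hmult, hconn, hgrow.of_forall_subset_mem href⟩
  · obtain ⟨𝒰, hcov, hmult, -, hgrow⟩ := h ((n + 1) * r) (by positivity)
    obtain ⟨𝒱, hdec, hnear⟩ := exists_decomp_of_rMultLE hr hcov hmult
    exact ⟨𝒱, hdec, hgrow.of_forall_subset_membersMeeting hF hmult hnear⟩
  · obtain ⟨𝒱, hdec, hgrow⟩ := h (2 * R + 1) (by linarith)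
    obtain ⟨𝒰, hcov, hmult, hconn, href⟩ := exists_cover_of_decomp hdec (lt_add_one _)
    exact ⟨𝒰, hcov, hmult, hconn, fun s hs m =>
      (hgrow s hs m).image_iterNbhd_of_forall_subset_mem href⟩
  · obtain ⟨𝒰, hcov, hmult, -, hgrow⟩ := h ((n + 1) * r) (by positivity)
    obtain ⟨𝒱, hdec, hnear⟩ := exists_decomp_of_rMultLE hr hcov hmult
    have hR : 0 ≤ (n + 1 : ℝ) * r := by positivity
    exact ⟨𝒱, hdec, fun s hs m => (hgrow (s + (n + 1) * r) (by linarith) m)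
      |>.image_iterNbhd_of_forall_subset_membersMeeting hF hmult hnear⟩

/-- Cover formulations of `asdim_F` and `ov-asdim_F`. -/
theorem asdim_cover_characterisation
    (F : Set (ℝ → ℝ)) (hF : NondecrFamily F)
    (X : Type*) [MetricSpace X] (hX : UnifDiscrete X) (n : ℕ) :
    (AsdimLE F X n ↔
      ∀ R : ℝ, 0 < R → ∃ 𝒰 : Set (Set X),
        (∀ x : X, ∃ U ∈ 𝒰, x ∈ U) ∧ RMultLE 𝒰 R (n + 1) ∧
        (∀ U ∈ 𝒰, RConn (2 * R) U) ∧ FGrowing F 𝒰) ∧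
    (OvAsdimLE F X n ↔
      ∀ R : ℝ, 0 < R → ∃ 𝒰 : Set (Set X),
        (∀ x : X, ∃ U ∈ 𝒰, x ∈ U) ∧ RMultLE 𝒰 R (n + 1) ∧
        (∀ U ∈ 𝒰, RConn (2 * R) U) ∧
        ∀ s : ℝ, 1 ≤ s → ∀ m : ℕ, FGrowing F ((iterNbhd 𝒰 s m) '' 𝒰)) :=
  asdim_cover_characterisation_general F hF X n
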